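/- arXiv:2111.09079 — 4 statements merged into one kernel-verified Lean document; each statement's English description precedes it below -/
import Mathlib

section
/- Let P' be a real polynomial satisfying P'(x) ∈ [−1,1] for all x ∈ [−2,2], P'(x) ∈ [−1,−1+ξ] for x ∈ [−2,−η], and P'(x) ∈ [1−ξ,1] for x ∈ [η,2], where ξ ∈ (0,1/2) and 0 < η. Let t₁, t₂, θ₁, θ₂ ∈ [0,1] with θ₁ ≤ t₁ < t₂ ≤ 1−θ₂ and η ≤ min(θ₁,θ₂)/2. Define Q(x) = (1−ξ)·(P'(x−t₁+θ₁/2) + P'(−x+t₂+θ₂/2))/2 + ξ. Then Q(x) ∈ [1−ξ, 1] for all x ∈ [t₁,t₂], and Q(x) ∈ [0, 3ξ/2] for all x ∈ [0, t₁−θ₁] ∪ [t₂+θ₂, 1]. -/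
/-- Given a real polynomial `P'` with `P'(x) ∈ [−1,1]` on `[−2,2]`,
`P'(x) ∈ [−1,−1+ξ]` on `[−2,−η]`, `P'(x) ∈ [1−ξ,1]` on `[η,2]` (with `ξ ∈ (0,1/2)`,
`η > 0`), and parameters `θ₁ ≤ t₁ < t₂ ≤ 1−θ₂` in `[0,1]` with `η ≤ min(θ₁,θ₂)/2`,
the polynomial `Q(x) = (1−ξ)(P'(x−t₁+θ₁/2) + P'(−x+t₂+θ₂/2))/2 + ξ` satisfies
`Q(x) ∈ [1−ξ,1]` on `[t₁,t₂]` and `Q(x) ∈ [0, 3ξ/2]` on `[0,t₁−θ₁] ∪ [t₂+θ₂,1]`. -/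
theorem threshold_polynomial_Q (P' : Polynomial ℝ) (ξ η t₁ t₂ θ₁ θ₂ : ℝ)
    (hξ : 0 < ξ) (hξ2 : ξ < 1 / 2) (hη : 0 < η)
    (hθ₁ : θ₁ ∈ Set.Icc (0 : ℝ) 1) (hθ₂ : θ₂ ∈ Set.Icc (0 : ℝ) 1)
    (h1 : θ₁ ≤ t₁) (h2 : t₁ < t₂) (h3 : t₂ ≤ 1 - θ₂)
    (hηθ : η ≤ min θ₁ θ₂ / 2)
    (hb : ∀ x ∈ Set.Icc (-2 : ℝ) 2, P'.eval x ∈ Set.Icc (-1 : ℝ) 1)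
    (hneg : ∀ x ∈ Set.Icc (-2 : ℝ) (-η), P'.eval x ∈ Set.Icc (-1 : ℝ) (-1 + ξ))
    (hpos : ∀ x ∈ Set.Icc η (2 : ℝ), P'.eval x ∈ Set.Icc (1 - ξ) 1) :
    (∀ x ∈ Set.Icc t₁ t₂,
      (1 - ξ) * (P'.eval (x - t₁ + θ₁ / 2) + P'.eval (-x + t₂ + θ₂ / 2)) / 2 + ξ
        ∈ Set.Icc (1 - ξ) 1) ∧
    (∀ x ∈ Set.Icc (0 : ℝ) (t₁ - θ₁) ∪ Set.Icc (t₂ + θ₂) 1,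
      (1 - ξ) * (P'.eval (x - t₁ + θ₁ / 2) + P'.eval (-x + t₂ + θ₂ / 2)) / 2 + ξ
        ∈ Set.Icc (0 : ℝ) (3 * ξ / 2)) := by

  have hη1 : η ≤ θ₁ / 2 := le_trans hηθ (by have := min_le_left θ₁ θ₂; linarith)
  have hη2 : η ≤ θ₂ / 2 := le_trans hηθ (by have := min_le_right θ₁ θ₂; linarith)
  obtain ⟨hθ₁0, hθ₁1⟩ := hθ₁
  obtain ⟨hθ₂0, hθ₂1⟩ := hθ₂
  constructor
  · intro x ⟨hx1, hx2⟩
    have ha := hpos (x - t₁ + θ₁ / 2) ⟨by linarith, by linarith⟩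
    have hbb := hpos (-x + t₂ + θ₂ / 2) ⟨by linarith, by linarith⟩
    obtain ⟨ha1, ha2⟩ := ha
    obtain ⟨hb1, hb2⟩ := hbb
    constructor
    · nlinarith
    · nlinarith
  · intro x hx
    rcases hx with ⟨hx1, hx2⟩ | ⟨hx1, hx2⟩
    · have ha := hneg (x - t₁ + θ₁ / 2) ⟨by linarith, by linarith⟩
      have hbb := hpos (-x + t₂ + θ₂ / 2) ⟨by linarith, by linarith⟩
      obtain ⟨ha1, ha2⟩ := ha
      obtain ⟨hb1, hb2⟩ := hbb
      constructor
      · nlinarith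
      · nlinarith
    · have ha := hpos (x - t₁ + θ₁ / 2) ⟨by linarith, by linarith⟩
      have hbb := hneg (-x + t₂ + θ₂ / 2) ⟨by linarith, by linarith⟩
      obtain ⟨ha1, ha2⟩ := ha
      obtain ⟨hb1, hb2⟩ := hbb
      constructor
      · nlinarith
      · nlinarith
end

section
/- Let v, w ∈ ℂ^N with ‖v‖ ≤ 1, ‖w‖ ≤ 1, and all coordinates of v over which w is supported nonzero. Let m > 0 and p : {1,...,N} → [0,1] satisfy m² p(i) ∈ [(1−4ζ)|vᵢ|², (1+7ζ)|vᵢ|²] for each i (interpreting the contribution as 0 when vᵢ = 0 and wᵢ = 0). Then |Σᵢ (wᵢ m² / vᵢ) p(i) − Σᵢ v̄ᵢ wᵢ| ≤ 7ζ, where the sum on the left runs over indices with vᵢ ≠ 0 and we assume wᵢ = 0 whenever vᵢ = 0. -/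
/-! Index by index, `wᵢ m² pᵢ / vᵢ - v̄ᵢ wᵢ = (wᵢ / vᵢ) (m² pᵢ - |vᵢ|²)`, and the sampling
condition bounds the second factor by `7ζ |vᵢ|²`, so the term is at most `7ζ |wᵢ| |vᵢ|`.
Summing and applying Cauchy–Schwarz to `∑ |wᵢ| |vᵢ|` gives `7ζ`. -/

open Finset RCLike ComplexConjugate

section

variable {𝕜 : Type*} [RCLike 𝕜]

theorem mul_ofReal_div_sub_conj_mul (v w : 𝕜) (c : ℝ) :
    w * (c : 𝕜) / v - conj v * w = w / v * ((c - ‖v‖ ^ 2 : ℝ) : 𝕜) := by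
  rcases eq_or_ne v 0 with rfl | hv
  · simp
  · have hconj : conj v = (‖v‖ ^ 2 : 𝕜) / v := by
      rw [eq_div_iff hv, mul_comm, mul_conj]
    rw [hconj]
    push_cast
    field_simp

theorem norm_mul_ofReal_div_sub_conj_mul_le {v w : 𝕜} {c ε : ℝ}
    (hc : |c - ‖v‖ ^ 2| ≤ ε * ‖v‖ ^ 2) :
    ‖w * (c : 𝕜) / v - conj v * w‖ ≤ ε * (‖w‖ * ‖v‖) := by
  rw [mul_ofReal_div_sub_conj_mul, norm_mul, norm_div, norm_ofReal]
  calc ‖w‖ / ‖v‖ * |c - ‖v‖ ^ 2| ≤ ‖w‖ / ‖v‖ * (ε * ‖v‖ ^ 2) := by gcongr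
    _ = ε * (‖w‖ * ‖v‖) := by
      rcases eq_or_ne ‖v‖ 0 with hv | hv
      · simp [hv]
      · field_simp

end

theorem abs_sub_le_of_mul_le_of_le_mul {a x δ ε : ℝ} (hx : 0 ≤ x) (hδε : δ ≤ ε)
    (hlow : (1 - δ) * x ≤ a) (hupp : a ≤ (1 + ε) * x) : |a - x| ≤ ε * x := by
  rw [abs_le]
  constructor <;> nlinarith

theorem Finset.sum_mul_le_one_of_sum_sq_le_one {ι : Type*} (s : Finset ι) {f g : ι → ℝ}
    (hf : ∑ i ∈ s, f i ^ 2 ≤ 1) (hg : ∑ i ∈ s, g i ^ 2 ≤ 1) : ∑ i ∈ s, f i * g i ≤ 1 := by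
  have hCS := sum_mul_sq_le_sq_mul_sq s f g
  have hf0 : 0 ≤ ∑ i ∈ s, f i ^ 2 := sum_nonneg fun i _ => sq_nonneg (f i)
  have hg0 : 0 ≤ ∑ i ∈ s, g i ^ 2 := sum_nonneg fun i _ => sq_nonneg (g i)
  have hsq : (∑ i ∈ s, f i * g i) ^ 2 ≤ 1 ^ 2 := by nlinarith
  exact abs_le_of_sq_le_sq' hsq zero_le_one |>.2

theorem importance_sampling_bias_general {N : ℕ} (v w : Fin N → ℂ) (m ζ : ℝ) (p : Fin N → ℝ)
    (hζ0 : 0 ≤ ζ)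
    (hv : ∑ i, ‖v i‖ ^ 2 ≤ 1) (hw : ∑ i, ‖w i‖ ^ 2 ≤ 1)
    (hpb : ∀ i, (1 - 4 * ζ) * ‖v i‖ ^ 2 ≤ m ^ 2 * p i ∧
                m ^ 2 * p i ≤ (1 + 7 * ζ) * ‖v i‖ ^ 2) :
    ‖(∑ i, if v i = 0 then (0 : ℂ)
           else (w i * (m : ℂ) ^ 2 / v i) * (p i : ℂ))
      - ∑ i, (starRingEnd ℂ) (v i) * w i‖ ≤ 7 * ζ := by
  have hterm : ∀ i, ‖(if v i = 0 then (0 : ℂ) else (w i * (m : ℂ) ^ 2 / v i) * (p i : ℂ))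
      - conj (v i) * w i‖ ≤ 7 * ζ * (‖w i‖ * ‖v i‖) := by
    intro i
    -- the guard is redundant: division by `0` already gives `0`
    have hguard : (if v i = 0 then (0 : ℂ) else (w i * (m : ℂ) ^ 2 / v i) * (p i : ℂ))
        = w i * ((m ^ 2 * p i : ℝ) : ℂ) / v i := by
      split_ifs with h
      · simp [h]
      · push_cast
        ring
    rw [hguard]
    obtain ⟨hlow, hupp⟩ := hpb i
    exact norm_mul_ofReal_div_sub_conj_mul_le
      (abs_sub_le_of_mul_le_of_le_mul (sq_nonneg _) (by linarith) hlow hupp)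
  calc _ = ‖∑ i, ((if v i = 0 then (0 : ℂ) else (w i * (m : ℂ) ^ 2 / v i) * (p i : ℂ))
          - conj (v i) * w i)‖ := by rw [sum_sub_distrib]
    _ ≤ ∑ i, 7 * ζ * (‖w i‖ * ‖v i‖) := (norm_sum_le _ _).trans (sum_le_sum fun i _ => hterm i)
    _ = 7 * ζ * ∑ i, ‖w i‖ * ‖v i‖ := (mul_sum _ _ _).symm
    _ ≤ 7 * ζ := mul_le_of_le_one_right (by positivity) (sum_mul_le_one_of_sum_sq_le_one _ hw hv)

/-- Bias bound for the importance-sampling inner-product estimator.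
If `‖v‖,‖w‖ ≤ 1`, `wᵢ = 0` whenever `vᵢ = 0`, `m > 0`, and
`m² p(i) ∈ [(1−4ζ)|vᵢ|², (1+7ζ)|vᵢ|²]` for each `i`, then
`|∑ᵢ (wᵢ m²/vᵢ) p(i) − ∑ᵢ v̄ᵢ wᵢ| ≤ 7ζ` (terms with `vᵢ = 0` contributing `0`). -/
theorem importance_sampling_bias {N : ℕ} (v w : Fin N → ℂ) (m ζ : ℝ) (p : Fin N → ℝ)
    (hζ0 : 0 ≤ ζ) (hζ1 : ζ < 1) (hm : 0 < m)
    (hv : ∑ i, ‖v i‖ ^ 2 ≤ 1) (hw : ∑ i, ‖w i‖ ^ 2 ≤ 1)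
    (hsupp : ∀ i, v i = 0 → w i = 0)
    (hp : ∀ i, p i ∈ Set.Icc (0 : ℝ) 1)
    (hpb : ∀ i, (1 - 4 * ζ) * ‖v i‖ ^ 2 ≤ m ^ 2 * p i ∧
                m ^ 2 * p i ≤ (1 + 7 * ζ) * ‖v i‖ ^ 2) :
    ‖(∑ i, if v i = 0 then (0 : ℂ)
           else (w i * (m : ℂ) ^ 2 / v i) * (p i : ℂ))
      - ∑ i, (starRingEnd ℂ) (v i) * w i‖ ≤ 7 * ζ :=
  importance_sampling_bias_general v w m ζ p hζ0 hv hw hpb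
end

section
/- Under the same setup, the second moment of the estimator is bounded: Σᵢ (|wᵢ| m² / |vᵢ|)² p(i) ≤ (1+7ζ)², hence the variance of each of the real and imaginary parts of the estimator X (which takes value wᵢm²/vᵢ with probability p(i)) is at most (1+7ζ)². -/
/-!
Write `X i = wᵢ m² / vᵢ`. The sampling bound `m² p(i) ≤ (1+7ζ)|vᵢ|²` cancels the `|vᵢ|²` in the
denominator of `p(i)|X i|²`, leaving `(1+7ζ) m² |wᵢ|²`; summing over `i` gives
`(1+7ζ) m² ‖w‖² ≤ (1+7ζ) m²`. Summing the same bound against `∑ p(i) = 1` gives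
`m² ≤ (1+7ζ)‖v‖² ≤ 1+7ζ`. Each variance is at most the second moment of a real part or
imaginary part, hence at most that of `X`.
-/

section ImportanceSampling

variable {ι : Type*}

theorem le_of_forall_mul_le_of_sum_eq_one [Fintype ι] {p a : ι → ℝ} {t c : ℝ} (hc : 0 ≤ c)
    (hpsum : ∑ i, p i = 1) (ha : ∑ i, a i ≤ 1) (h : ∀ i, t * p i ≤ c * a i) : t ≤ c :=
  calc t = ∑ i, t * p i := by rw [← Finset.mul_sum, hpsum, mul_one]
    _ ≤ ∑ i, c * a i := Finset.sum_le_sum fun i _ => h i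
    _ = c * ∑ i, a i := by rw [Finset.mul_sum]
    _ ≤ c := mul_le_of_le_one_right hc ha

theorem sum_mul_sq_sub_sq_sum_mul_le [Fintype ι] {p g : ι → ℝ} {X : ι → ℂ} (hp : ∀ i, 0 ≤ p i)
    (hg : ∀ i, |g i| ≤ ‖X i‖) :
    ∑ i, p i * g i ^ 2 - (∑ i, p i * g i) ^ 2 ≤ ∑ i, p i * ‖X i‖ ^ 2 :=
  calc ∑ i, p i * g i ^ 2 - (∑ i, p i * g i) ^ 2 ≤ ∑ i, p i * g i ^ 2 :=
        sub_le_self _ (sq_nonneg _)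
    _ ≤ ∑ i, p i * ‖X i‖ ^ 2 := Finset.sum_le_sum fun i _ =>
        mul_le_mul_of_nonneg_left (sq_le_sq.mpr ((abs_norm (X i)).symm ▸ hg i)) (hp i)

noncomputable def importanceEstimator (v w : ι → ℂ) (m : ℝ) (i : ι) : ℂ :=
  if v i = 0 then 0 else w i * (m : ℂ) ^ 2 / v i

theorem mul_norm_importanceEstimator_sq_le {v w : ι → ℂ} {m c : ℝ} {p : ι → ℝ} (i : ι)
    (hc : 0 ≤ c) (hpb : m ^ 2 * p i ≤ c * ‖v i‖ ^ 2) :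
    p i * ‖importanceEstimator v w m i‖ ^ 2 ≤ c * m ^ 2 * ‖w i‖ ^ 2 := by
  by_cases hvi : v i = 0
  · simp only [importanceEstimator, hvi, if_true, norm_zero, ne_eq, OfNat.ofNat_ne_zero,
      not_false_eq_true, zero_pow, mul_zero]
    positivity
  · have hv : 0 < ‖v i‖ ^ 2 := by positivity
    have hX : ‖importanceEstimator v w m i‖ ^ 2 = m ^ 2 * (m ^ 2 * ‖w i‖ ^ 2 / ‖v i‖ ^ 2) := by
      simp only [importanceEstimator, hvi, if_false, norm_div, norm_mul, norm_pow,
        Complex.norm_real, Real.norm_eq_abs, sq_abs, div_pow, mul_pow]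
      ring
    calc p i * ‖importanceEstimator v w m i‖ ^ 2
        = (m ^ 2 * p i) * (m ^ 2 * ‖w i‖ ^ 2 / ‖v i‖ ^ 2) := by rw [hX]; ring
      _ ≤ (c * ‖v i‖ ^ 2) * (m ^ 2 * ‖w i‖ ^ 2 / ‖v i‖ ^ 2) :=
        mul_le_mul_of_nonneg_right hpb (by positivity)
      _ = c * m ^ 2 * ‖w i‖ ^ 2 := by field_simp

theorem sum_mul_norm_importanceEstimator_sq_le [Fintype ι] {v w : ι → ℂ} {m c : ℝ} {p : ι → ℝ}
    (hc : 0 ≤ c) (hv : ∑ i, ‖v i‖ ^ 2 ≤ 1) (hw : ∑ i, ‖w i‖ ^ 2 ≤ 1) (hpsum : ∑ i, p i = 1)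
    (hpb : ∀ i, m ^ 2 * p i ≤ c * ‖v i‖ ^ 2) :
    ∑ i, p i * ‖importanceEstimator v w m i‖ ^ 2 ≤ c ^ 2 := by
  have hm : m ^ 2 ≤ c := le_of_forall_mul_le_of_sum_eq_one hc hpsum hv hpb
  calc ∑ i, p i * ‖importanceEstimator v w m i‖ ^ 2 ≤ ∑ i, c * m ^ 2 * ‖w i‖ ^ 2 :=
        Finset.sum_le_sum fun i _ => mul_norm_importanceEstimator_sq_le i hc (hpb i)
    _ = c * m ^ 2 * ∑ i, ‖w i‖ ^ 2 := by rw [Finset.mul_sum]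
    _ ≤ c * m ^ 2 := mul_le_of_le_one_right (by positivity) hw
    _ ≤ c ^ 2 := by rw [sq c]; exact mul_le_mul_of_nonneg_left hm hc

end ImportanceSampling

theorem importance_sampling_variance_general {N : ℕ} (v w : Fin N → ℂ) (m ζ : ℝ) (p : Fin N → ℝ)
    (hζ0 : 0 ≤ ζ)
    (hv : ∑ i, ‖v i‖ ^ 2 ≤ 1) (hw : ∑ i, ‖w i‖ ^ 2 ≤ 1)
    (hp0 : ∀ i, 0 ≤ p i) (hpsum : ∑ i, p i = 1)
    (hpb : ∀ i, m ^ 2 * p i ≤ (1 + 7 * ζ) * ‖v i‖ ^ 2) :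
    (∑ i, p i * ‖if v i = 0 then (0 : ℂ) else w i * (m : ℂ) ^ 2 / v i‖ ^ 2
        ≤ (1 + 7 * ζ) ^ 2) ∧
    (∑ i, p i * ((if v i = 0 then (0 : ℂ) else w i * (m : ℂ) ^ 2 / v i).re) ^ 2
        - (∑ i, p i * (if v i = 0 then (0 : ℂ) else w i * (m : ℂ) ^ 2 / v i).re) ^ 2
        ≤ (1 + 7 * ζ) ^ 2) ∧
    (∑ i, p i * ((if v i = 0 then (0 : ℂ) else w i * (m : ℂ) ^ 2 / v i).im) ^ 2
        - (∑ i, p i * (if v i = 0 then (0 : ℂ) else w i * (m : ℂ) ^ 2 / v i).im) ^ 2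
        ≤ (1 + 7 * ζ) ^ 2) := by
  have hmoment := sum_mul_norm_importanceEstimator_sq_le (w := w) (by linarith) hv hw hpsum hpb
  refine ⟨hmoment, ?_, ?_⟩
  · exact (sum_mul_sq_sub_sq_sum_mul_le hp0 fun i => Complex.abs_re_le_norm _).trans hmoment
  · exact (sum_mul_sq_sub_sq_sum_mul_le hp0 fun i => Complex.abs_im_le_norm _).trans hmoment

/-- Second-moment and variance bound for the importance-sampling
estimator `X` taking value `wᵢm²/vᵢ` with probability `p(i)` (value `0` when
`vᵢ = 0`): the second moment is at most `(1+7ζ)²`, hence the variances of the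
real and imaginary parts are at most `(1+7ζ)²`. -/
theorem importance_sampling_variance {N : ℕ} (v w : Fin N → ℂ) (m ζ : ℝ) (p : Fin N → ℝ)
    (hζ0 : 0 ≤ ζ) (hζ1 : ζ < 1) (hm : 0 < m)
    (hv : ∑ i, ‖v i‖ ^ 2 ≤ 1) (hw : ∑ i, ‖w i‖ ^ 2 ≤ 1)
    (hsupp : ∀ i, v i = 0 → w i = 0)
    (hp0 : ∀ i, 0 ≤ p i) (hpsum : ∑ i, p i = 1)
    (hpb : ∀ i, m ^ 2 * p i ≤ (1 + 7 * ζ) * ‖v i‖ ^ 2)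
    (hmv : m ≤ (1 + ζ) * Real.sqrt (∑ i, ‖v i‖ ^ 2)) :
    (∑ i, p i * ‖if v i = 0 then (0 : ℂ) else w i * (m : ℂ) ^ 2 / v i‖ ^ 2
        ≤ (1 + 7 * ζ) ^ 2) ∧
    (∑ i, p i * ((if v i = 0 then (0 : ℂ) else w i * (m : ℂ) ^ 2 / v i).re) ^ 2
        - (∑ i, p i * (if v i = 0 then (0 : ℂ) else w i * (m : ℂ) ^ 2 / v i).re) ^ 2
        ≤ (1 + 7 * ζ) ^ 2) ∧
    (∑ i, p i * ((if v i = 0 then (0 : ℂ) else w i * (m : ℂ) ^ 2 / v i).im) ^ 2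
        - (∑ i, p i * (if v i = 0 then (0 : ℂ) else w i * (m : ℂ) ^ 2 / v i).im) ^ 2
        ≤ (1 + 7 * ζ) ^ 2) :=
  importance_sampling_variance_general v w m ζ p hζ0 hv hw hp0 hpsum hpb
end

section
/- Let A ∈ ℂ^{M×N} with singular values in [0,1], let P be an even real polynomial with P(x) ∈ [0,1] for x ∈ [−1,1], P(x) ≥ 1−χ on [t₁,t₂], and P(x) ≤ χ on [0,t₁−θ₁]∪[t₂+θ₂,1], where χ = δ²/3. Let u ∈ ℂ^N, ‖u‖ ≤ 1. If A has a singular value in [t₁,t₂] and ‖Π_A^{[t₁,t₂]}u‖ ≥ δ, then u†P(√(A†A))u ≥ 2δ²/3; if A has no singular value in (t₁−θ₁, t₂+θ₂), then u†P(√(A†A))u ≤ δ²/3. Hence any estimate ẑ of u†P(√(A†A))u with additive error at most δ²/7 distinguishes the two cases (it exceeds δ²/2 in the first case and is below δ²/2 in the second). -/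
/-! Expanding `u = ∑ αᵢ vᵢ` in the orthonormal family `v` diagonalises the quadratic form:
`Q = ∑ P(σᵢ) |αᵢ|²`. Since `0 ≤ P(σᵢ)`, keeping only the indices with `σᵢ ∈ [t₁, t₂]` gives
`Q ≥ (1 - δ²/3) δ² ≥ 2δ²/3`; if no `σᵢ` lies in the gap then every `P(σᵢ) ≤ δ²/3` and
`∑ |αᵢ|² ≤ 1` give `Q ≤ δ²/3`. The margin `δ²/6 > δ²/7` on either side of `δ²/2` absorbs the
estimation error. -/

open Matrix BigOperators

theorem star_dotProduct_sum_smul_vecMulVec_mulVec {ι n : Type*} [Fintype ι] [Fintype n]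
    (c : ι → ℝ) (v : ι → n → ℂ) (u : n → ℂ) :
    star u ⬝ᵥ (∑ i, (c i : ℂ) • vecMulVec (v i) (star (v i))) *ᵥ u =
      ((∑ i, c i * ‖star (v i) ⬝ᵥ u‖ ^ 2 : ℝ) : ℂ) := by
  rw [sum_mulVec, dotProduct_sum]
  push_cast
  refine Finset.sum_congr rfl fun i _ => ?_
  rw [smul_mulVec, vecMulVec_mulVec, op_smul_eq_smul, dotProduct_smul, dotProduct_smul,
    star_dotProduct, ← Complex.mul_conj', Complex.star_def]
  simp only [smul_eq_mul, Complex.conj_conj]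

theorem star_dotProduct_sum_smul_of_orthonormal {R ι n : Type*} [CommSemiring R] [Star R]
    [Fintype ι] [DecidableEq ι] [Fintype n] {v : ι → n → R}
    (hv : ∀ i j, star (v i) ⬝ᵥ v j = if i = j then 1 else 0) (α : ι → R) (i : ι) :
    star (v i) ⬝ᵥ ∑ j, α j • v j = α i := by
  simp [dotProduct_sum, dotProduct_smul, hv]

theorem mul_sum_le_sum_mul_of_le_on {ι : Type*} [Fintype ι] (s : Finset ι) {f w : ι → ℝ}
    (hf : ∀ i, 0 ≤ f i) (hw : ∀ i, 0 ≤ w i) {a : ℝ} (ha : ∀ i ∈ s, a ≤ f i) :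
    a * ∑ i ∈ s, w i ≤ ∑ i, f i * w i :=
  calc a * ∑ i ∈ s, w i = ∑ i ∈ s, a * w i := Finset.mul_sum _ _ _
    _ ≤ ∑ i ∈ s, f i * w i := Finset.sum_le_sum fun i hi => by gcongr; exacts [hw i, ha i hi]
    _ ≤ ∑ i, f i * w i := Finset.sum_le_sum_of_subset_of_nonneg (Finset.subset_univ s)
        fun i _ _ => mul_nonneg (hf i) (hw i)

theorem sum_mul_le_mul_sum_of_le {ι : Type*} [Fintype ι] {f w : ι → ℝ}
    (hw : ∀ i, 0 ≤ w i) {b : ℝ} (hb : ∀ i, f i ≤ b) :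
    ∑ i, f i * w i ≤ b * ∑ i, w i := by
  rw [Finset.mul_sum]
  exact Finset.sum_le_sum fun i _ => mul_le_mul_of_nonneg_right (hb i) (hw i)

theorem svt_singular_value_test_general {N : ℕ}
    (σ : Fin N → ℝ) (v : Fin N → Fin N → ℂ)
    (hv : ∀ i j, star (v i) ⬝ᵥ v j = if i = j then 1 else 0)
    (hσ : ∀ i, σ i ∈ Set.Icc (0 : ℝ) 1)
    (t₁ t₂ θ₁ θ₂ δ : ℝ)
    (hδ : 0 < δ) (hδ1 : δ ≤ 1)
    (P : Polynomial ℝ)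
    (hP01 : ∀ x ∈ Set.Icc (-1 : ℝ) 1, P.eval x ∈ Set.Icc (0 : ℝ) 1)
    (hPbig : ∀ x ∈ Set.Icc t₁ t₂, 1 - δ ^ 2 / 3 ≤ P.eval x)
    (hPsmall : ∀ x, x ∈ Set.Icc 0 (t₁ - θ₁) ∪ Set.Icc (t₂ + θ₂) 1 → P.eval x ≤ δ ^ 2 / 3)
    (α : Fin N → ℂ) (u : Fin N → ℂ) (hu : u = ∑ i, α i • v i)
    (hnorm : ∑ i, ‖α i‖ ^ 2 ≤ 1)
    (Q : ℝ)
    (hQ : Q = (star u ⬝ᵥ (∑ i, ((P.eval (σ i) : ℝ) : ℂ) •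
        Matrix.vecMulVec (v i) (star (v i))).mulVec u).re) :
    (((∃ i, σ i ∈ Set.Icc t₁ t₂) ∧
        δ ^ 2 ≤ ∑ i ∈ Finset.univ.filter (fun i => t₁ ≤ σ i ∧ σ i ≤ t₂), ‖α i‖ ^ 2) →
      2 * δ ^ 2 / 3 ≤ Q) ∧
    ((∀ i, σ i ∉ Set.Ioo (t₁ - θ₁) (t₂ + θ₂)) → Q ≤ δ ^ 2 / 3) ∧
    (∀ z : ℝ, |z - Q| ≤ δ ^ 2 / 7 →
      (((∃ i, σ i ∈ Set.Icc t₁ t₂) ∧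
          δ ^ 2 ≤ ∑ i ∈ Finset.univ.filter (fun i => t₁ ≤ σ i ∧ σ i ≤ t₂), ‖α i‖ ^ 2) →
        δ ^ 2 / 2 < z) ∧
      ((∀ i, σ i ∉ Set.Ioo (t₁ - θ₁) (t₂ + θ₂)) → z < δ ^ 2 / 2)) := by
  have hQ_eq : Q = ∑ i, P.eval (σ i) * ‖α i‖ ^ 2 := by
    rw [hQ, star_dotProduct_sum_smul_vecMulVec_mulVec, Complex.ofReal_re, hu]
    simp only [star_dotProduct_sum_smul_of_orthonormal hv]
  have hP_nonneg : ∀ i, 0 ≤ P.eval (σ i) := fun i =>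
    (hP01 _ ⟨by linarith [(hσ i).1], (hσ i).2⟩).1
  have hδ_sq : δ ^ 2 ≤ 1 := pow_le_one₀ hδ.le hδ1
  have lower : ((∃ i, σ i ∈ Set.Icc t₁ t₂) ∧
      δ ^ 2 ≤ ∑ i ∈ Finset.univ.filter (fun i => t₁ ≤ σ i ∧ σ i ≤ t₂), ‖α i‖ ^ 2) →
      2 * δ ^ 2 / 3 ≤ Q := by
    rintro ⟨-, hmass⟩
    have := mul_sum_le_sum_mul_of_le_on (Finset.univ.filter (fun i => t₁ ≤ σ i ∧ σ i ≤ t₂))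
      hP_nonneg (fun i => sq_nonneg ‖α i‖) fun i hi => hPbig _ (Finset.mem_filter.1 hi).2
    nlinarith
  have upper : (∀ i, σ i ∉ Set.Ioo (t₁ - θ₁) (t₂ + θ₂)) → Q ≤ δ ^ 2 / 3 := by
    intro hgap
    have hP_small : ∀ i, P.eval (σ i) ≤ δ ^ 2 / 3 := fun i => by
      apply hPsmall
      rcases le_or_gt (σ i) (t₁ - θ₁) with h | h
      · exact Or.inl ⟨(hσ i).1, h⟩
      · exact Or.inr ⟨not_lt.1 fun h' => hgap i ⟨h, h'⟩, (hσ i).2⟩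
    have := sum_mul_le_mul_sum_of_le (fun i => sq_nonneg ‖α i‖) hP_small
    nlinarith
  refine ⟨lower, upper, fun z hz => ?_⟩
  obtain ⟨hz_ge, hz_le⟩ := abs_le.mp hz
  exact ⟨fun h => by nlinarith [lower h], fun h => by nlinarith [upper h]⟩

/-- Let `A = ∑ i, σᵢ • uᵢvᵢ†` with `{vᵢ}` orthonormal, `σᵢ ∈ [0,1]`,
`P` even with `P ∈ [0,1]` on `[−1,1]`, `P ≥ 1−χ` on `[t₁,t₂]`, `P ≤ χ` on
`[0,t₁−θ₁]∪[t₂+θ₂,1]` where `χ = δ²/3`, and `u = ∑ αᵢvᵢ` with `‖u‖ ≤ 1`.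
Set `Q = u†P(√(A†A))u`. If `A` has a singular value in `[t₁,t₂]` and
`‖Π_A^{[t₁,t₂]}u‖ ≥ δ`, then `Q ≥ 2δ²/3`; if `A` has no singular value in
`(t₁−θ₁,t₂+θ₂)`, then `Q ≤ δ²/3`. Hence any estimate `z` of `Q` with additive
error `≤ δ²/7` exceeds `δ²/2` in the first case and is below `δ²/2` in the second. -/
theorem svt_singular_value_test {M N : ℕ} (A : Matrix (Fin M) (Fin N) ℂ)
    (σ : Fin N → ℝ) (uu : Fin N → Fin M → ℂ) (v : Fin N → Fin N → ℂ)
    (hv : ∀ i j, star (v i) ⬝ᵥ v j = if i = j then 1 else 0)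
    (hA : A = ∑ i, (σ i : ℂ) • Matrix.vecMulVec (uu i) (star (v i)))
    (hσ : ∀ i, σ i ∈ Set.Icc (0 : ℝ) 1)
    (t₁ t₂ θ₁ θ₂ δ : ℝ)
    (h0 : 0 ≤ t₁ - θ₁) (hθ₁ : 0 < θ₁) (h12 : t₁ < t₂) (hθ₂ : 0 < θ₂) (h1 : t₂ + θ₂ ≤ 1)
    (hδ : 0 < δ) (hδ1 : δ ≤ 1)
    (P : Polynomial ℝ) (hPeven : ∀ x : ℝ, P.eval (-x) = P.eval x)
    (hP01 : ∀ x ∈ Set.Icc (-1 : ℝ) 1, P.eval x ∈ Set.Icc (0 : ℝ) 1)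
    (hPbig : ∀ x ∈ Set.Icc t₁ t₂, 1 - δ ^ 2 / 3 ≤ P.eval x)
    (hPsmall : ∀ x, x ∈ Set.Icc 0 (t₁ - θ₁) ∪ Set.Icc (t₂ + θ₂) 1 → P.eval x ≤ δ ^ 2 / 3)
    (α : Fin N → ℂ) (u : Fin N → ℂ) (hu : u = ∑ i, α i • v i)
    (hnorm : ∑ i, ‖α i‖ ^ 2 ≤ 1)
    (Q : ℝ)
    (hQ : Q = (star u ⬝ᵥ (∑ i, ((P.eval (σ i) : ℝ) : ℂ) •
        Matrix.vecMulVec (v i) (star (v i))).mulVec u).re) :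
    (((∃ i, σ i ∈ Set.Icc t₁ t₂) ∧
        δ ^ 2 ≤ ∑ i ∈ Finset.univ.filter (fun i => t₁ ≤ σ i ∧ σ i ≤ t₂), ‖α i‖ ^ 2) →
      2 * δ ^ 2 / 3 ≤ Q) ∧
    ((∀ i, σ i ∉ Set.Ioo (t₁ - θ₁) (t₂ + θ₂)) → Q ≤ δ ^ 2 / 3) ∧
    (∀ z : ℝ, |z - Q| ≤ δ ^ 2 / 7 →
      (((∃ i, σ i ∈ Set.Icc t₁ t₂) ∧
          δ ^ 2 ≤ ∑ i ∈ Finset.univ.filter (fun i => t₁ ≤ σ i ∧ σ i ≤ t₂), ‖α i‖ ^ 2) →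
        δ ^ 2 / 2 < z) ∧
      ((∀ i, σ i ∉ Set.Ioo (t₁ - θ₁) (t₂ + θ₂)) → z < δ ^ 2 / 2)) :=
  svt_singular_value_test_general σ v hv hσ t₁ t₂ θ₁ θ₂ δ hδ hδ1 P hP01 hPbig hPsmall α u hu hnorm Q
    hQ
end
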